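/- Suppose r̄ ≥ (3/2) r_D, τ₃ κ² r_D < 4/9 and τ₄ κ² r_D² < 1/3. Then |E[‖Q φ‖ 1_S] − E[‖Q F^{-1} ξ‖ 1_S]| ≤ ‖Q F^{-1} D‖ · (τ₃/2) · 𝔞_D. -/

import Mathlib

open MeasureTheory RealInnerProductSpace

/-- Application of a matrix to a vector in Euclidean space. -/
noncomputable def mApp {p q : ℕ} (M : Matrix (Fin q) (Fin p) ℝ)
    (v : EuclideanSpace ℝ (Fin p)) : EuclideanSpace ℝ (Fin q) :=
  Matrix.toEuclideanLin M v

/-- Operator norm of (the Euclidean linear map induced by) a matrix. -/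
noncomputable def mopNorm {p q : ℕ} (M : Matrix (Fin q) (Fin p) ℝ) : ℝ :=
  ‖(LinearMap.toContinuousLinearMap (Matrix.toEuclideanLin M))‖

/-!
Pointwise, `|‖Q φ‖ - ‖Q F⁻¹ ξ‖| ≤ ‖Q F⁻¹ ∇T(F⁻¹ ξ)‖`. The third-derivative bound at `υ*` says
that `∇T(u)` has `D`-dual norm at most `τ₃/2 ‖D u‖²`, i.e. `‖D⁻¹ ∇T(u)‖ ≤ τ₃/2 ‖D u‖²`, so
writing `Q F⁻¹ = (Q F⁻¹ D) D⁻¹` gives `‖Q F⁻¹ ∇T(u)‖ ≤ ‖Q F⁻¹ D‖ τ₃/2 ‖D u‖²`. Integrating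
this over `S` and then over all of `Ω` yields the bound by `‖Q F⁻¹ D‖ (τ₃/2) 𝔞_D`.
-/

section MatrixAction

variable {p q r : ℕ}

lemma mApp_mul (A : Matrix (Fin q) (Fin r) ℝ) (B : Matrix (Fin r) (Fin p) ℝ)
    (v : EuclideanSpace ℝ (Fin p)) : mApp (A * B) v = mApp A (mApp B v) := by
  simp [mApp]

lemma mApp_add (M : Matrix (Fin q) (Fin p) ℝ) (a b : EuclideanSpace ℝ (Fin p)) :
    mApp M (a + b) = mApp M a + mApp M b :=
  map_add _ _ _

@[fun_prop]
lemma continuous_mApp (M : Matrix (Fin q) (Fin p) ℝ) : Continuous (mApp M) :=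
  (LinearMap.toContinuousLinearMap (Matrix.toEuclideanLin M)).continuous

lemma norm_mApp_le (M : Matrix (Fin q) (Fin p) ℝ) (v : EuclideanSpace ℝ (Fin p)) :
    ‖mApp M v‖ ≤ mopNorm M * ‖v‖ :=
  (LinearMap.toContinuousLinearMap (Matrix.toEuclideanLin M)).le_opNorm v

lemma inner_mApp_left_of_isHermitian {M : Matrix (Fin p) (Fin p) ℝ} (hM : M.IsHermitian)
    (x y : EuclideanSpace ℝ (Fin p)) : ⟪mApp M x, y⟫ = ⟪x, mApp M y⟫ := by
  have hadj := Matrix.toEuclideanLin_conjTranspose_eq_adjoint M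
  rw [hM.eq] at hadj
  simp only [mApp]
  nth_rewrite 1 [hadj]
  exact LinearMap.adjoint_inner_left _ _ _

lemma MeasureTheory.MemLp.mApp {Ω : Type*} [MeasurableSpace Ω] {μ : Measure Ω} {s : ENNReal}
    {X : Ω → EuclideanSpace ℝ (Fin p)} (hX : MemLp X s μ) (M : Matrix (Fin q) (Fin p) ℝ) :
    MemLp (fun ω => mApp M (X ω)) s μ :=
  (LinearMap.toContinuousLinearMap (Matrix.toEuclideanLin M)).comp_memLp' hX

lemma norm_mApp_inv_le_of_abs_inner_le {D : Matrix (Fin p) (Fin p) ℝ} (hD : D.PosDef)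
    {g : EuclideanSpace ℝ (Fin p)} {c : ℝ} (hc : 0 ≤ c)
    (hg : ∀ w, |⟪g, w⟫| ≤ c * ‖mApp D w‖) : ‖mApp D⁻¹ g‖ ≤ c := by
  set x := mApp D⁻¹ g
  have hDx : mApp D (mApp D⁻¹ x) = x := by
    rw [← mApp_mul, Matrix.mul_nonsing_inv D (D.isUnit_iff_isUnit_det.1 hD.isUnit)]
    simp [mApp]
  -- test `g` against `w = D⁻¹ x`
  have hsq : ‖x‖ ^ 2 ≤ c * ‖x‖ :=
    calc ‖x‖ ^ 2 = ⟪g, mApp D⁻¹ x⟫ := by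
          rw [← real_inner_self_eq_norm_sq, inner_mApp_left_of_isHermitian hD.isHermitian.inv]
      _ ≤ c * ‖x‖ := by simpa only [hDx] using (le_abs_self _).trans (hg (mApp D⁻¹ x))
  nlinarith [norm_nonneg x]

end MatrixAction

lemma continuous_of_continuous_inner {X E : Type*} [TopologicalSpace X] [NormedAddCommGroup E]
    [InnerProductSpace ℝ E] [FiniteDimensional ℝ E] {g : X → E}
    (hg : ∀ w, Continuous fun x => ⟪g x, w⟫) : Continuous g := by
  let b := stdOrthonormalBasis ℝ E
  have hexp : g = fun x => ∑ i, ⟪b i, g x⟫ • b i := funext fun x => (b.sum_repr' (g x)).symm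
  rw [hexp]
  exact continuous_finsetSum _ fun i _ =>
    ((hg (b i)).congr fun x => real_inner_comm (b i) (g x)).smul continuous_const

section CubicGradient

variable {p : ℕ} (A : ContinuousMultilinearMap ℝ (fun _ : Fin 3 => EuclideanSpace ℝ (Fin p)) ℝ)
  {gT : EuclideanSpace ℝ (Fin p) → EuclideanSpace ℝ (Fin p)}

lemma continuous_of_inner_eq_cubic (hgT : ∀ u w, ⟪gT u, w⟫ = 1 / 2 * A ![u, u, w]) :
    Continuous gT :=
  continuous_of_continuous_inner fun w => by simp_rw [hgT]; fun_prop

lemma norm_mApp_le_of_inner_eq_cubic {D : Matrix (Fin p) (Fin p) ℝ} (hD : D.PosDef)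
    {τ : ℝ} (hτ : 0 ≤ τ) (hA : ∀ u w, |A ![u, u, w]| ≤ τ * ‖mApp D u‖ ^ 2 * ‖mApp D w‖)
    (hgT : ∀ u w, ⟪gT u, w⟫ = 1 / 2 * A ![u, u, w]) {q : ℕ} (M : Matrix (Fin q) (Fin p) ℝ)
    (u : EuclideanSpace ℝ (Fin p)) :
    ‖mApp M (gT u)‖ ≤ mopNorm (M * D) * (τ / 2) * ‖mApp D u‖ ^ 2 := by
  have hdual : ‖mApp D⁻¹ (gT u)‖ ≤ τ / 2 * ‖mApp D u‖ ^ 2 := by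
    refine norm_mApp_inv_le_of_abs_inner_le hD (by positivity) fun w => ?_
    rw [hgT, abs_mul, abs_of_pos one_half_pos]
    linarith [hA u w]
  have hfactor : mApp M (gT u) = mApp (M * D) (mApp D⁻¹ (gT u)) := by
    rw [← mApp_mul,
      Matrix.mul_nonsing_inv_cancel_right D M (D.isUnit_iff_isUnit_det.1 hD.isUnit)]
  rw [hfactor, mul_assoc]
  exact (norm_mApp_le _ _).trans (mul_le_mul_of_nonneg_left hdual (norm_nonneg _))

lemma abs_norm_add_mApp_sub_norm_le_of_inner_eq_cubic {D : Matrix (Fin p) (Fin p) ℝ}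
    (hD : D.PosDef) {τ : ℝ} (hτ : 0 ≤ τ)
    (hA : ∀ u w, |A ![u, u, w]| ≤ τ * ‖mApp D u‖ ^ 2 * ‖mApp D w‖)
    (hgT : ∀ u w, ⟪gT u, w⟫ = 1 / 2 * A ![u, u, w]) {q : ℕ} (Q : Matrix (Fin q) (Fin p) ℝ)
    (G : Matrix (Fin p) (Fin p) ℝ) (u : EuclideanSpace ℝ (Fin p)) :
    |‖mApp Q (u + mApp G (gT u))‖ - ‖mApp Q u‖| ≤
      mopNorm (Q * G * D) * (τ / 2) * ‖mApp D u‖ ^ 2 :=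
  calc _ ≤ ‖mApp Q (mApp G (gT u))‖ := by
        simpa only [mApp_add, add_sub_cancel_left] using
          abs_norm_sub_norm_le (mApp Q (u + mApp G (gT u))) (mApp Q u)
    _ ≤ _ := by
        simpa only [mApp_mul] using norm_mApp_le_of_inner_eq_cubic A hD hτ hA hgT (Q * G) u

end CubicGradient

lemma abs_setIntegral_sub_le_integral {Ω : Type*} [MeasurableSpace Ω] {μ : Measure Ω}
    {a b g : Ω → ℝ} (S : Set Ω) (ha : AEStronglyMeasurable a μ) (hb : Integrable b μ)
    (hg : Integrable g μ) (hab : ∀ ω, |a ω - b ω| ≤ g ω) :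
    |∫ ω in S, a ω ∂μ - ∫ ω in S, b ω ∂μ| ≤ ∫ ω, g ω ∂μ := by
  have hab_int : Integrable (a - b) μ :=
    hg.mono' (ha.sub hb.aestronglyMeasurable) (ae_of_all _ hab)
  have ha_int : Integrable a μ := by simpa using hab_int.add hb
  rw [← integral_sub ha_int.restrict hb.restrict]
  calc |∫ ω in S, (a ω - b ω) ∂μ| ≤ ∫ ω in S, g ω ∂μ :=
        by simpa only [Real.norm_eq_abs] using
          norm_integral_le_of_norm_le (f := fun ω => a ω - b ω) hg.restrict (ae_of_all _ hab)
    _ ≤ ∫ ω, g ω ∂μ :=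
        setIntegral_le_integral hg (ae_of_all _ fun ω => (abs_nonneg _).trans (hab ω))

theorem phi_first_moment_comparison_general
    {p : ℕ}
    (f : EuclideanSpace ℝ (Fin p) → ℝ)
    (υs : EuclideanSpace ℝ (Fin p))
    (F : Matrix (Fin p) (Fin p) ℝ)
    (D : Matrix (Fin p) (Fin p) ℝ) (hD : D.PosDef)
    (τ3 rb : ℝ) (hτ3 : 0 < τ3) (hrb : 0 < rb)
    (hT3 : ∀ υ : EuclideanSpace ℝ (Fin p), ‖mApp D (υ - υs)‖ ≤ rb →
      ∀ u w : EuclideanSpace ℝ (Fin p),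
        |iteratedFDeriv ℝ 3 f υ ![u, u, w]| ≤ τ3 * ‖mApp D u‖ ^ 2 * ‖mApp D w‖)
    (gT : EuclideanSpace ℝ (Fin p) → EuclideanSpace ℝ (Fin p))
    (hgT : ∀ u w : EuclideanSpace ℝ (Fin p),
      ⟪gT u, w⟫ = 1 / 2 * iteratedFDeriv ℝ 3 f υs ![u, u, w])
    {Ω : Type} [MeasurableSpace Ω] (P : Measure Ω) [IsProbabilityMeasure P]
    (ξ : Ω → EuclideanSpace ℝ (Fin p)) (hξ2 : MemLp ξ 2 P)
    (S : Set Ω)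
    {q : ℕ} (Q : Matrix (Fin q) (Fin p) ℝ)
    (aD : ℝ) (haD : aD = ∫ ω, ‖mApp D (mApp F⁻¹ (ξ ω))‖ ^ 2 ∂P)
    :
    |(∫ ω in S, ‖mApp Q (mApp F⁻¹ (ξ ω) + mApp F⁻¹ (gT (mApp F⁻¹ (ξ ω))))‖ ∂P) -
        ∫ ω in S, ‖mApp Q (mApp F⁻¹ (ξ ω))‖ ∂P| ≤
      mopNorm (Q * F⁻¹ * D) * (τ3 / 2) * aD := by
  have hT3s := hT3 υs (by simpa [mApp] using hrb.le)
  have hx : MemLp (fun ω => mApp F⁻¹ (ξ ω)) 2 P := hξ2.mApp F⁻¹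
  have hgTc := continuous_of_inner_eq_cubic _ hgT
  have hmeas : AEStronglyMeasurable
      (fun ω => ‖mApp Q (mApp F⁻¹ (ξ ω) + mApp F⁻¹ (gT (mApp F⁻¹ (ξ ω))))‖) P :=
    (by fun_prop : Continuous fun u => ‖mApp Q (u + mApp F⁻¹ (gT u))‖)
      |>.comp_aestronglyMeasurable hx.aestronglyMeasurable
  have hQ : Integrable (fun ω => ‖mApp Q (mApp F⁻¹ (ξ ω))‖) P :=
    ((hx.mApp Q).integrable one_le_two).norm
  have hD2 : Integrable (fun ω => ‖mApp D (mApp F⁻¹ (ξ ω))‖ ^ 2) P :=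
    (hx.mApp D).norm.integrable_sq
  rw [haD, ← integral_const_mul]
  exact abs_setIntegral_sub_le_integral S hmeas hQ (hD2.const_mul _) fun ω =>
    abs_norm_add_mApp_sub_norm_le_of_inner_eq_cubic _ hD hτ3.le hT3s hgT Q F⁻¹ _

theorem phi_first_moment_comparison
    {p : ℕ} (hp : 1 ≤ p)
    (f : EuclideanSpace ℝ (Fin p) → ℝ)
    (hconv : ConvexOn ℝ Set.univ f)
    (hf : ContDiff ℝ 4 f)
    (υs : EuclideanSpace ℝ (Fin p))
    (hgrad : gradient f υs = 0)
    (F : Matrix (Fin p) (Fin p) ℝ) (hF : F.PosDef)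
    (hFdef : ∀ u w : EuclideanSpace ℝ (Fin p),
      iteratedFDeriv ℝ 2 f υs ![u, w] = ⟪mApp F u, w⟫)
    (D : Matrix (Fin p) (Fin p) ℝ) (hD : D.PosDef)
    (κ : ℝ) (hκ : 0 < κ)
    (hLoew : (κ ^ 2 • F - D * D).PosSemidef)
    (τ3 τ4 rb : ℝ) (hτ3 : 0 < τ3) (hτ4 : 0 < τ4) (hrb : 0 < rb)
    (hT3 : ∀ υ : EuclideanSpace ℝ (Fin p), ‖mApp D (υ - υs)‖ ≤ rb →
      ∀ u w : EuclideanSpace ℝ (Fin p),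
        |iteratedFDeriv ℝ 3 f υ ![u, u, w]| ≤ τ3 * ‖mApp D u‖ ^ 2 * ‖mApp D w‖)
    (hT4 : ∀ υ : EuclideanSpace ℝ (Fin p), ‖mApp D (υ - υs)‖ ≤ rb →
      ∀ u w : EuclideanSpace ℝ (Fin p),
        |iteratedFDeriv ℝ 4 f υ ![u, u, u, w]| ≤ τ4 * ‖mApp D u‖ ^ 3 * ‖mApp D w‖)
    (gT : EuclideanSpace ℝ (Fin p) → EuclideanSpace ℝ (Fin p))
    (hgT : ∀ u w : EuclideanSpace ℝ (Fin p),
      ⟪gT u, w⟫ = 1 / 2 * iteratedFDeriv ℝ 3 f υs ![u, u, w])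
    (rD : ℝ) (hrD : 0 < rD)
    {Ω : Type} [MeasurableSpace Ω] (P : Measure Ω) [IsProbabilityMeasure P]
    (ξ : Ω → EuclideanSpace ℝ (Fin p)) (hξm : Measurable ξ) (hξ2 : MemLp ξ 2 P)
    (S : Set Ω) (hS : MeasurableSet S)
    (hξD : ∀ ω ∈ S, ‖mApp D (mApp F⁻¹ (ξ ω))‖ ≤ rD)
    {q : ℕ} (Q : Matrix (Fin q) (Fin p) ℝ)
    (aD : ℝ) (haD : aD = ∫ ω, ‖mApp D (mApp F⁻¹ (ξ ω))‖ ^ 2 ∂P)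
    (h1 : rb ≥ 3 / 2 * rD) (h2 : τ3 * κ ^ 2 * rD < 4 / 9)
    (h3 : τ4 * κ ^ 2 * rD ^ 2 < 1 / 3)
    :
    |(∫ ω in S, ‖mApp Q (mApp F⁻¹ (ξ ω) + mApp F⁻¹ (gT (mApp F⁻¹ (ξ ω))))‖ ∂P) -
        ∫ ω in S, ‖mApp Q (mApp F⁻¹ (ξ ω))‖ ∂P| ≤
      mopNorm (Q * F⁻¹ * D) * (τ3 / 2) * aD :=
  phi_first_moment_comparison_general f υs F D hD τ3 rb hτ3 hrb hT3 gT hgT P ξ hξ2 S Q aD haD
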